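/- arXiv:2210.14043 — 4 statements merged into one kernel-verified Lean document; each statement's English description precedes it below -/
import Mathlib

section
/- Let R be a commutative ring containing an element π, r ≤ n, Y an n×r matrix with top block I_r and bottom block Y₂, and Z an n×r matrix with blocks Z₁, Z₂. Assume Z₁ = Z₁ᵀ and Z₂ = Y₂·Z₁ᵀ. Then the equation Y·Zᵀ·Y = 2π·Y holds if and only if Z₁·(I_r + Y₂ᵀ·Y₂) = 2π·I_r. -/
open Matrix

/-- Given `Y = [I_r; Y₂]`, `Z = [Z₁; Z₂]` with `Z₁` symmetric and `Z₂ = Y₂·Z₁ᵀ`,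
`Y·Zᵀ·Y = 2π·Y` iff `Z₁·(I_r + Y₂ᵀ·Y₂) = 2π·I_r`. -/
theorem stmt1 {R : Type*} [CommRing R] (π : R) {r m : ℕ}
    (Y₂ Z₂ : Matrix (Fin m) (Fin r) R) (Z₁ : Matrix (Fin r) (Fin r) R)
    (Y Z : Matrix (Fin r ⊕ Fin m) (Fin r) R)
    (hY : Y = Matrix.fromRows 1 Y₂) (hZ : Z = Matrix.fromRows Z₁ Z₂)
    (hZ₁ : Z₁ = Z₁ᵀ) (hZ₂ : Z₂ = Y₂ * Z₁ᵀ) :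
    Y * Zᵀ * Y = (2 * π) • Y ↔ Z₁ * (1 + Y₂ᵀ * Y₂) = (2 * π) • (1 : Matrix (Fin r) (Fin r) R) := by
  have key : Zᵀ * Y = Z₁ * (1 + Y₂ᵀ * Y₂) := by
    rw [hY, hZ, hZ₂, transpose_fromRows, fromCols_mul_fromRows]
    rw [transpose_mul, transpose_transpose, ← hZ₁]
    rw [mul_one, mul_add, mul_one, Matrix.mul_assoc]
  have smulRows : (2 * π) • fromRows (1 : Matrix (Fin r) (Fin r) R) Y₂ = fromRows ((2 * π) • (1 : Matrix (Fin r) (Fin r) R))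
      ((2 * π) • Y₂) := by
    ext i j; cases i <;> simp
  rw [Matrix.mul_assoc, key, hY, fromRows_mul, smulRows, fromRows_inj.eq_iff]
  constructor
  · rintro ⟨h, -⟩
    rwa [Matrix.one_mul] at h
  · intro h
    constructor
    · rwa [Matrix.one_mul]
    · rw [h, Matrix.mul_smul, Matrix.mul_one]
end

section
/- Let R be a commutative ring with element π, and let A be an n×n matrix, Y, Z n×r matrices with Y having top block I_r, such that A = Y·Zᵀ − π·I_n. Then the pair of conditions (Aᵀ = A and A·Y = π·Y) is equivalent to the pair (Z·Yᵀ = Y·Zᵀ and Y·Zᵀ·Y = 2π·Y). -/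
open Matrix

/-- With `A = Y·Zᵀ − π·I_n` and `Y = [I_r; Y₂]`, the conditions `(Aᵀ = A ∧ A·Y = π·Y)` are
equivalent to `(Z·Yᵀ = Y·Zᵀ ∧ Y·Zᵀ·Y = 2π·Y)`. -/
theorem stmt2 {R : Type*} [CommRing R] (π : R) {r m : ℕ}
    (Y₂ : Matrix (Fin m) (Fin r) R)
    (A : Matrix (Fin r ⊕ Fin m) (Fin r ⊕ Fin m) R)
    (Y Z : Matrix (Fin r ⊕ Fin m) (Fin r) R)
    (hY : Y = Matrix.fromRows 1 Y₂)
    (hA : A = Y * Zᵀ - π • (1 : Matrix (Fin r ⊕ Fin m) (Fin r ⊕ Fin m) R)) :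
    (Aᵀ = A ∧ A * Y = π • Y) ↔ (Z * Yᵀ = Y * Zᵀ ∧ Y * Zᵀ * Y = (2 * π) • Y) := by
  subst hA
  have h1 : (Y * Zᵀ - π • (1 : Matrix (Fin r ⊕ Fin m) (Fin r ⊕ Fin m) R))ᵀ
      = Z * Yᵀ - π • 1 := by
    simp [transpose_sub, transpose_mul]
  have h2 : (Y * Zᵀ - π • (1 : Matrix (Fin r ⊕ Fin m) (Fin r ⊕ Fin m) R)) * Y
      = Y * Zᵀ * Y - π • Y := by
    rw [Matrix.sub_mul, Matrix.smul_mul, Matrix.one_mul]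
  rw [h1, h2, sub_left_inj, sub_eq_iff_eq_add, two_mul, add_smul]
end

section
/- Let k be a field of characteristic ≠ 2, n ≥ 3, and in the polynomial ring k[x₃,…,xₙ, y₃,…,yₙ, a, t₂, t₃] set Q(x) = 1 + Σxᵢ², Q(y) = 1 + Σyᵢ², P = Σxᵢyᵢ, m₁ = t₂·Q(y) + P, m₂ = Q(x) − t₃·Q(y). Then the ideal J̄₁ = (m₁, m₂, a·(t₃ − t₂²)·Q(y)) equals the intersection I₁ ∩ I₂ ∩ I₃, where I₁ = (a, m₁, m₂), I₂ = (t₃ − t₂², m₁, Q(x) − t₂²·Q(y)), and I₃ = (Q(y), P, Q(x)). -/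
open MvPolynomial

noncomputable section

/-- Variables: `x₃,…,xₙ` (first summand), `y₃,…,yₙ` (second summand), and three extra
variables (third summand). -/
abbrev Var (m : ℕ) : Type := (Fin m ⊕ Fin m) ⊕ Fin 3

/-- `Q(x) = 1 + Σ xᵢ²`. -/
def Qx (m : ℕ) (k : Type) [CommRing k] : MvPolynomial (Var m) k :=
  1 + ∑ i : Fin m, X (Sum.inl (Sum.inl i)) ^ 2

/-- `Q(y) = 1 + Σ yᵢ²`. -/
def Qy (m : ℕ) (k : Type) [CommRing k] : MvPolynomial (Var m) k :=
  1 + ∑ i : Fin m, X (Sum.inl (Sum.inr i)) ^ 2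

/-- `P = Σ xᵢ yᵢ`. -/
def Pxy (m : ℕ) (k : Type) [CommRing k] : MvPolynomial (Var m) k :=
  ∑ i : Fin m, X (Sum.inl (Sum.inl i)) * X (Sum.inl (Sum.inr i))

/-- The first extra variable. -/
def w0 (m : ℕ) (k : Type) [CommRing k] : MvPolynomial (Var m) k := X (Sum.inr 0)

/-- The second extra variable. -/
def w1 (m : ℕ) (k : Type) [CommRing k] : MvPolynomial (Var m) k := X (Sum.inr 1)

/-- The third extra variable. -/
def w2 (m : ℕ) (k : Type) [CommRing k] : MvPolynomial (Var m) k := X (Sum.inr 2)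

namespace Stmt3Aux

/-! ### Generic span helpers -/

lemma mem_span_triple {R : Type*} [CommRing R] {x y z w : R} (a b c : R)
    (h : w = a * x + b * y + c * z) : w ∈ Ideal.span ({x, y, z} : Set R) := by
  have hx : x ∈ Ideal.span ({x, y, z} : Set R) := Ideal.subset_span (by simp)
  have hy : y ∈ Ideal.span ({x, y, z} : Set R) := Ideal.subset_span (by simp)
  have hz : z ∈ Ideal.span ({x, y, z} : Set R) := Ideal.subset_span (by simp)
  rw [h]
  exact add_mem (add_mem (Ideal.mul_mem_left _ _ hx) (Ideal.mul_mem_left _ _ hy))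
    (Ideal.mul_mem_left _ _ hz)

lemma span_triple_le {R : Type*} [CommRing R] {x y z : R} {I : Ideal R}
    (hx : x ∈ I) (hy : y ∈ I) (hz : z ∈ I) : Ideal.span ({x, y, z} : Set R) ≤ I := by
  rw [Ideal.span_le]
  intro w hw
  simp only [Set.mem_insert_iff, Set.mem_singleton_iff] at hw
  rcases hw with rfl | rfl | rfl <;> assumption

lemma exists_triple {R : Type*} [CommRing R] {x y z w : R}
    (h : w ∈ Ideal.span ({x, y, z} : Set R)) : ∃ a b c, w = a * x + b * y + c * z := by
  rw [Ideal.mem_span_insert] at h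
  obtain ⟨a, z1, hz1, rfl⟩ := h
  rw [Ideal.mem_span_pair] at hz1
  obtain ⟨b, c, hbc⟩ := hz1
  exact ⟨a, b, c, by rw [← hbc]; ring⟩

/-! ### The abstract core argument -/

/-- The key computation, abstractly: if `a` is regular modulo `(U, M1, M2)` and `a*U` is
regular modulo `K = (Qy3, P3, Qx3)`, and `M1, M2` differ from `P3, Qx3` by multiples of
`Qy3`, then `(a,M1,M2) ∩ (U,M1,M2) ∩ K ⊆ (M1, M2, a*U*Qy3)`. -/
lemma core_abstract {B : Type*} [CommRing B] (a U M1 M2 Qy3 P3 Qx3 c2 c3 : B)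
    (hregN : ∀ g : B, a * g ∈ Ideal.span ({U, M1, M2} : Set B) →
      g ∈ Ideal.span ({U, M1, M2} : Set B))
    (hregK : ∀ g : B, a * U * g ∈ Ideal.span ({Qy3, P3, Qx3} : Set B) →
      g ∈ Ideal.span ({Qy3, P3, Qx3} : Set B))
    (hp3 : P3 = M1 - c2 * Qy3) (hqx3 : Qx3 = M2 + c3 * Qy3) (f : B)
    (h1 : f ∈ Ideal.span ({a, M1, M2} : Set B))
    (h2 : f ∈ Ideal.span ({U, M1, M2} : Set B))
    (h3 : f ∈ Ideal.span ({Qy3, P3, Qx3} : Set B)) :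
    f ∈ Ideal.span ({M1, M2, a * U * Qy3} : Set B) := by
  obtain ⟨r, z, hz, hf0⟩ := Ideal.mem_span_insert.mp h1
  obtain ⟨z₁, z₂, hz12⟩ := Ideal.mem_span_pair.mp hz
  have har : a * r ∈ Ideal.span ({U, M1, M2} : Set B) := by
    have he : a * r = f - z := by rw [hf0]; ring
    rw [he]
    exact sub_mem h2 (Ideal.span_mono (Set.subset_insert _ _) hz)
  obtain ⟨α, β, γ, hr⟩ := exists_triple (hregN r har)
  have hM1K : M1 ∈ Ideal.span ({Qy3, P3, Qx3} : Set B) :=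
    mem_span_triple c2 1 0 (by rw [hp3]; ring)
  have hM2K : M2 ∈ Ideal.span ({Qy3, P3, Qx3} : Set B) :=
    mem_span_triple (-c3) 0 1 (by rw [hqx3]; ring)
  have hαK : a * U * α ∈ Ideal.span ({Qy3, P3, Qx3} : Set B) := by
    have he : a * U * α = f - ((a * β + z₁) * M1 + (a * γ + z₂) * M2) := by
      rw [hf0, hr, ← hz12]; ring
    rw [he]
    exact sub_mem h3 (add_mem (Ideal.mul_mem_left _ _ hM1K) (Ideal.mul_mem_left _ _ hM2K))
  obtain ⟨e₁, e₂, e₃, hα⟩ := exists_triple (hregK α hαK)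
  refine mem_span_triple (e₂ * (a * U) + (a * β + z₁)) (e₃ * (a * U) + (a * γ + z₂))
    (e₁ - e₂ * c2 + e₃ * c3) ?_
  rw [hf0, hr, ← hz12, hα, hp3, hqx3]
  ring

/-! ### Peeling lemmas for polynomial rings -/

lemma peel_X {B : Type*} [CommRing B] {I : Ideal B} {g : Polynomial B}
    (h : Polynomial.X * g ∈ I.map (Polynomial.C : B →+* Polynomial B)) :
    g ∈ I.map (Polynomial.C : B →+* Polynomial B) := by
  rw [Ideal.mem_map_C_iff] at h ⊢
  intro n
  simpa [Polynomial.coeff_X_mul] using h (n + 1)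

lemma peel_monic {B : Type*} [CommRing B] {I : Ideal B} {p g : Polynomial B}
    (hp : p.Monic) (h : p * g ∈ I.map (Polynomial.C : B →+* Polynomial B)) :
    g ∈ I.map (Polynomial.C : B →+* Polynomial B) := by
  have hker := Polynomial.ker_mapRingHom (Ideal.Quotient.mk I)
  rw [Ideal.mk_ker] at hker
  rw [← hker, RingHom.mem_ker] at h ⊢
  simp only [Polynomial.coe_mapRingHom, Polynomial.map_mul] at h
  exact ((hp.map _).mul_right_eq_zero_iff).mp h

lemma u_regular {B : Type*} [CommRing B] (I : Ideal B) (c : B) {w : Polynomial B}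
    (h : (Polynomial.C c - Polynomial.X ^ 2) * w ∈ I.map (Polynomial.C : B →+* Polynomial B)) :
    w ∈ I.map (Polynomial.C : B →+* Polynomial B) := by
  have hm : (Polynomial.X ^ 2 - Polynomial.C c : Polynomial B).Monic := by
    apply Polynomial.monic_X_pow_sub
    exact lt_of_le_of_lt Polynomial.degree_C_le (by norm_num)
  have h2 : (Polynomial.X ^ 2 - Polynomial.C c) * (-w) ∈
      I.map (Polynomial.C : B →+* Polynomial B) := by
    have he : (Polynomial.X ^ 2 - Polynomial.C c) * (-w)
        = (Polynomial.C c - Polynomial.X ^ 2) * w := by ring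
    rw [he]; exact h
  simpa using neg_mem (peel_monic hm h2)

lemma peel_C_u {B : Type*} [CommRing B] {I : Ideal B} {u : Polynomial B}
    {g : Polynomial (Polynomial B)}
    (hu : ∀ w : Polynomial B, u * w ∈ I.map (Polynomial.C : B →+* Polynomial B) →
      w ∈ I.map (Polynomial.C : B →+* Polynomial B))
    (h : Polynomial.C u * g ∈
      (I.map (Polynomial.C : B →+* Polynomial B)).map
        (Polynomial.C : Polynomial B →+* Polynomial (Polynomial B))) :
    g ∈ (I.map (Polynomial.C : B →+* Polynomial B)).map
        (Polynomial.C : Polynomial B →+* Polynomial (Polynomial B)) := by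
  rw [Ideal.mem_map_C_iff] at h ⊢
  intro n
  apply hu
  simpa [Polynomial.coeff_C_mul] using h n

/-! ### The concrete regularity facts in `A[t₃][t₂][a]` -/

section Core

variable {A : Type} [CommRing A]

/-- `m₁ = t₂ Q(y) + P`, where `t₂` is the outer variable. -/
def m1D (qy p : A) : Polynomial (Polynomial A) :=
  Polynomial.X * Polynomial.C (Polynomial.C qy) + Polynomial.C (Polynomial.C p)

/-- `m₂ = Q(x) − t₃ Q(y)`, where `t₃` is the inner variable. -/
def m2D (qx qy : A) : Polynomial (Polynomial A) :=
  Polynomial.C (Polynomial.C qx) - Polynomial.C Polynomial.X * Polynomial.C (Polynomial.C qy)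

/-- `u = t₃ − t₂²`. -/
def uD (A : Type) [CommRing A] : Polynomial (Polynomial A) :=
  Polynomial.C Polynomial.X - Polynomial.X ^ 2

/-- `C³ x`. -/
def C3 (x : A) : Polynomial (Polynomial (Polynomial A)) :=
  Polynomial.C (Polynomial.C (Polynomial.C x))

set_option maxHeartbeats 3000000 in
lemma regN (qx qy p : A) (g : Polynomial (Polynomial (Polynomial A)))
    (hg : Polynomial.X * g ∈
      Ideal.span {Polynomial.C (uD A), Polynomial.C (m1D qy p), Polynomial.C (m2D qx qy)}) :
    g ∈ Ideal.span {Polynomial.C (uD A), Polynomial.C (m1D qy p), Polynomial.C (m2D qx qy)} := by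
  have hNmap : Ideal.span {Polynomial.C (uD A), Polynomial.C (m1D qy p), Polynomial.C (m2D qx qy)}
      = (Ideal.span ({uD A, m1D qy p, m2D qx qy} : Set (Polynomial (Polynomial A)))).map
        (Polynomial.C : Polynomial (Polynomial A) →+* Polynomial (Polynomial (Polynomial A))) := by
    rw [Ideal.map_span]
    simp [Set.image_insert_eq]
  rw [hNmap] at hg ⊢
  exact peel_X hg

set_option maxHeartbeats 3000000 in
lemma regK (qx qy p : A) (g : Polynomial (Polynomial (Polynomial A)))
    (hg : Polynomial.X * Polynomial.C (uD A) * g ∈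
      Ideal.span {C3 qy, C3 p, C3 qx}) :
    g ∈ Ideal.span ({C3 qy, C3 p, C3 qx} :
      Set (Polynomial (Polynomial (Polynomial A)))) := by
  have hKmap : Ideal.span ({C3 qy, C3 p, C3 qx} : Set (Polynomial (Polynomial (Polynomial A))))
      = (((Ideal.span ({qy, p, qx} : Set A)).map (Polynomial.C : A →+* Polynomial A)).map
        (Polynomial.C : Polynomial A →+* Polynomial (Polynomial A))).map
        (Polynomial.C : Polynomial (Polynomial A) →+* Polynomial (Polynomial (Polynomial A))) := by
    rw [Ideal.map_span, Ideal.map_span, Ideal.map_span]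
    simp [Set.image_insert_eq, C3]
  rw [hKmap] at hg ⊢
  have h1 : Polynomial.C (uD A) * g ∈
      (((Ideal.span ({qy, p, qx} : Set A)).map (Polynomial.C : A →+* Polynomial A)).map
        (Polynomial.C : Polynomial A →+* Polynomial (Polynomial A))).map
        (Polynomial.C : Polynomial (Polynomial A) →+* Polynomial (Polynomial (Polynomial A))) :=
    peel_X (by rwa [mul_assoc] at hg)
  refine peel_C_u (fun w hw => ?_) h1
  exact u_regular _ Polynomial.X (by simpa [uD] using hw)

end Core

/-! ### The transport maps -/

variable (m : ℕ) (k : Type) [CommRing k]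

/-- Values of the transport map on the variables. -/
def gfun : Var m → Polynomial (Polynomial (Polynomial (MvPolynomial (Fin m ⊕ Fin m) k)))
  | Sum.inl v => Polynomial.C (Polynomial.C (Polynomial.C (X v)))
  | Sum.inr ⟨0, _⟩ => Polynomial.X
  | Sum.inr ⟨1, _⟩ => Polynomial.C Polynomial.X
  | Sum.inr ⟨2, _⟩ => Polynomial.C (Polynomial.C Polynomial.X)
  | Sum.inr ⟨n + 3, h⟩ => absurd h (by omega)

set_option maxSynthPendingDepth 5 in
/-- The transport map. -/
def phi : MvPolynomial (Var m) k →ₐ[k]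
    Polynomial (Polynomial (Polynomial (MvPolynomial (Fin m ⊕ Fin m) k))) :=
  aeval (gfun m k)

/-- The inverse transport map. -/
def psi : Polynomial (Polynomial (Polynomial (MvPolynomial (Fin m ⊕ Fin m) k))) →ₐ[k]
    MvPolynomial (Var m) k :=
  Polynomial.aevalTower
    (Polynomial.aevalTower
      (Polynomial.aevalTower (rename Sum.inl) (X (Sum.inr 2)))
      (X (Sum.inr 1)))
    (X (Sum.inr 0))

lemma psi_phi (f : MvPolynomial (Var m) k) : psi m k (phi m k f) = f := by
  have h : (psi m k).comp (phi m k) = AlgHom.id k (MvPolynomial (Var m) k) := by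
    apply algHom_ext
    intro v
    rcases v with v | j
    · simp [phi, psi, gfun, Polynomial.aevalTower_C]
    · fin_cases j <;>
        simp [phi, psi, gfun, Polynomial.aevalTower_X, Polynomial.aevalTower_C]
  calc psi m k (phi m k f) = ((psi m k).comp (phi m k)) f := rfl
    _ = f := by rw [h]; rfl

/-- `qx` downstairs. -/
def qxA : MvPolynomial (Fin m ⊕ Fin m) k := 1 + ∑ i : Fin m, X (Sum.inl i) ^ 2

/-- `qy` downstairs. -/
def qyA : MvPolynomial (Fin m ⊕ Fin m) k := 1 + ∑ i : Fin m, X (Sum.inr i) ^ 2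

/-- `p` downstairs. -/
def pA : MvPolynomial (Fin m ⊕ Fin m) k := ∑ i : Fin m, X (Sum.inl i) * X (Sum.inr i)

lemma phi_w0 : phi m k (w0 m k) = Polynomial.X := by
  simp [phi, w0]; rfl

lemma phi_w1 : phi m k (w1 m k) = Polynomial.C Polynomial.X := by
  simp [phi, w1]; rfl

lemma phi_w2 : phi m k (w2 m k) = Polynomial.C (Polynomial.C Polynomial.X) := by
  simp [phi, w2]; rfl

lemma phi_Qx : phi m k (Qx m k) = C3 (qxA m k) := by
  simp [phi, Qx, qxA, C3, gfun, map_sum]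

lemma phi_Qy : phi m k (Qy m k) = C3 (qyA m k) := by
  simp [phi, Qy, qyA, C3, gfun, map_sum]

lemma phi_Pxy : phi m k (Pxy m k) = C3 (pA m k) := by
  simp [phi, Pxy, pA, C3, gfun, map_sum]

end Stmt3Aux

open Stmt3Aux in
set_option maxSynthPendingDepth 5 in
set_option synthInstance.maxHeartbeats 1000000 in
set_option maxHeartbeats 3000000 in
/-- The main lemma, for arbitrary `m` and any commutative ring `k`. -/
theorem stmt3_main (k : Type) [CommRing k] (m : ℕ) :
    Ideal.span {w1 m k * (Qy m k) + Pxy m k, Qx m k - w2 m k * (Qy m k),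
        (w0 m k) * (w2 m k - (w1 m k) ^ 2) * (Qy m k)} =
      Ideal.span {w0 m k, w1 m k * (Qy m k) + Pxy m k, Qx m k - w2 m k * (Qy m k)} ⊓
        Ideal.span {w2 m k - (w1 m k) ^ 2, w1 m k * (Qy m k) + Pxy m k,
          Qx m k - (w1 m k) ^ 2 * (Qy m k)} ⊓
        Ideal.span {Qy m k, Pxy m k, Qx m k} := by
  apply le_antisymm
  · -- easy inclusions
    refine le_inf (le_inf ?_ ?_) ?_
    · exact span_triple_le
        (mem_span_triple 0 1 0 (by ring))
        (mem_span_triple 0 0 1 (by ring))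
        (mem_span_triple ((w2 m k - w1 m k ^ 2) * Qy m k) 0 0 (by ring))
    · exact span_triple_le
        (mem_span_triple 0 1 0 (by ring))
        (mem_span_triple (-(Qy m k)) 0 1 (by ring))
        (mem_span_triple (w0 m k * Qy m k) 0 0 (by ring))
    · exact span_triple_le
        (mem_span_triple (w1 m k) 1 0 (by ring))
        (mem_span_triple (-(w2 m k)) 0 1 (by ring))
        (mem_span_triple (w0 m k * (w2 m k - w1 m k ^ 2)) 0 0 (by ring))
  · -- hard inclusion
    intro f hf
    simp only [Ideal.mem_inf] at hf
    obtain ⟨⟨h1, h2⟩, h3⟩ := hf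
    -- replace the third generator of `I₂` by `m₂`
    have h2' : f ∈ Ideal.span ({w2 m k - w1 m k ^ 2, w1 m k * Qy m k + Pxy m k,
        Qx m k - w2 m k * Qy m k} : Set (MvPolynomial (Var m) k)) := by
      refine span_triple_le
        (mem_span_triple 1 0 0 (by ring))
        (mem_span_triple 0 1 0 (by ring))
        (mem_span_triple (Qy m k) 0 1 (by ring)) h2
    -- transport everything through `phi`
    have hM1 : phi m k (w1 m k * Qy m k + Pxy m k) = Polynomial.C (m1D (qyA m k) (pA m k)) := by
      simp only [map_add, map_mul, phi_w1, phi_Qy, phi_Pxy, m1D, C3]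
    have hM2 : phi m k (Qx m k - w2 m k * Qy m k)
        = Polynomial.C (m2D (qxA m k) (qyA m k)) := by
      simp only [map_sub, map_mul, phi_w2, phi_Qx, phi_Qy, m2D, C3]
    have hU : phi m k (w2 m k - w1 m k ^ 2)
        = Polynomial.C (uD (MvPolynomial (Fin m ⊕ Fin m) k)) := by
      simp only [map_sub, map_pow, phi_w1, phi_w2, uD]
    have hG : phi m k (w0 m k * (w2 m k - w1 m k ^ 2) * Qy m k) =
        Polynomial.X * Polynomial.C (uD (MvPolynomial (Fin m ⊕ Fin m) k)) * C3 (qyA m k) := by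
      rw [map_mul, map_mul, phi_w0, hU, phi_Qy]
    have h1' := Ideal.mem_map_of_mem ((phi m k) : MvPolynomial (Var m) k →+*
      Polynomial (Polynomial (Polynomial (MvPolynomial (Fin m ⊕ Fin m) k)))) h1
    rw [Ideal.map_span] at h1'
    simp only [Set.image_insert_eq, Set.image_singleton, RingHom.coe_coe] at h1'
    rw [phi_w0, hM1, hM2] at h1'
    have h2'' := Ideal.mem_map_of_mem ((phi m k) : MvPolynomial (Var m) k →+*
      Polynomial (Polynomial (Polynomial (MvPolynomial (Fin m ⊕ Fin m) k)))) h2'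
    rw [Ideal.map_span] at h2''
    simp only [Set.image_insert_eq, Set.image_singleton, RingHom.coe_coe] at h2''
    rw [hU, hM1, hM2] at h2''
    have h3' := Ideal.mem_map_of_mem ((phi m k) : MvPolynomial (Var m) k →+*
      Polynomial (Polynomial (Polynomial (MvPolynomial (Fin m ⊕ Fin m) k)))) h3
    rw [Ideal.map_span] at h3'
    simp only [Set.image_insert_eq, Set.image_singleton, RingHom.coe_coe] at h3'
    rw [phi_Qy, phi_Pxy, phi_Qx] at h3'
    -- the core argument
    have hres := core_abstract Polynomial.X
      (Polynomial.C (uD (MvPolynomial (Fin m ⊕ Fin m) k)))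
      (Polynomial.C (m1D (qyA m k) (pA m k)))
      (Polynomial.C (m2D (qxA m k) (qyA m k)))
      (C3 (qyA m k)) (C3 (pA m k)) (C3 (qxA m k))
      (Polynomial.C Polynomial.X) (Polynomial.C (Polynomial.C Polynomial.X))
      (regN (qxA m k) (qyA m k) (pA m k))
      (regK (qxA m k) (qyA m k) (pA m k))
      (by simp only [m1D, C3, map_add, map_mul]; ring)
      (by simp only [m2D, C3, map_sub, map_mul]; ring)
      (phi m k f) h1' h2'' h3'
    -- transport back through `psi`
    have hback := Ideal.mem_map_of_mem ((psi m k) :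
      Polynomial (Polynomial (Polynomial (MvPolynomial (Fin m ⊕ Fin m) k))) →+*
        MvPolynomial (Var m) k) hres
    rw [Ideal.map_span] at hback
    simp only [Set.image_insert_eq, Set.image_singleton, RingHom.coe_coe] at hback
    rw [← hM1, ← hM2, ← hG, psi_phi, psi_phi, psi_phi, psi_phi] at hback
    exact hback

/-- The ideal `J̄₁ = (m₁, m₂, a(t₃ − t₂²)Q(y))` equals `I₁ ∩ I₂ ∩ I₃`.
Here `w0 = a`, `w1 = t₂`, `w2 = t₃`. -/
theorem stmt3 (k : Type) [Field k] (hk : (2 : k) ≠ 0) (n : ℕ) (hn : 3 ≤ n) :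
    Ideal.span {w1 (n-2) k * (Qy (n-2) k) + Pxy (n-2) k, Qx (n-2) k - w2 (n-2) k * (Qy (n-2) k),
        (w0 (n-2) k) * (w2 (n-2) k - (w1 (n-2) k) ^ 2) * (Qy (n-2) k)} =
      Ideal.span {w0 (n-2) k, w1 (n-2) k * (Qy (n-2) k) + Pxy (n-2) k, Qx (n-2) k - w2 (n-2) k * (Qy (n-2) k)} ⊓
        Ideal.span {w2 (n-2) k - (w1 (n-2) k) ^ 2, w1 (n-2) k * (Qy (n-2) k) + Pxy (n-2) k,
          Qx (n-2) k - (w1 (n-2) k) ^ 2 * (Qy (n-2) k)} ⊓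
        Ideal.span {Qy (n-2) k, Pxy (n-2) k, Qx (n-2) k} :=
  stmt3_main k (n - 2)
end
end

section
/- Let k be a field of characteristic ≠ 2 and n ≥ 3. In k[x₃,…,xₙ, y₃,…,yₙ, b, t₁, t₃], the ideal J̄₂ = (Q(y) + t₁·P, Q(x) + t₃·P, b·(1 − t₁t₃)·P) equals I'₁ ∩ I'₂ ∩ I'₃, where I'₁ = (b, Q(y) + t₁·P, Q(x) + t₃·P), I'₂ = (1 − t₁t₃, Q(y) + t₁·P, Q(x) + t₃·P), I'₃ = (P, Q(y), Q(x)); here Q(x) = 1 + Σ xᵢ², Q(y) = 1 + Σ yᵢ², P = Σ xᵢyᵢ. -/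
open MvPolynomial

noncomputable section

lemma mem_span_tripleX {R : Type*} [CommRing R] {a b c x : R} (p q r : R)
    (h : x = p * a + q * b + r * c) : x ∈ Ideal.span ({a, b, c} : Set R) := by
  have ha : a ∈ Ideal.span ({a, b, c} : Set R) := Ideal.subset_span (by simp)
  have hb : b ∈ Ideal.span ({a, b, c} : Set R) := Ideal.subset_span (by simp)
  have hc : c ∈ Ideal.span ({a, b, c} : Set R) := Ideal.subset_span (by simp)
  rw [h]
  exact add_mem (add_mem (Ideal.mul_mem_left _ _ ha) (Ideal.mul_mem_left _ _ hb))
    (Ideal.mul_mem_left _ _ hc)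

lemma span_triple_exists {R : Type*} [CommRing R] {a b c x : R}
    (h : x ∈ Ideal.span ({a, b, c} : Set R)) : ∃ p q r, x = p * a + q * b + r * c := by
  rw [show ({a, b, c} : Set R) = insert a (insert b {c}) from rfl, Ideal.mem_span_insert] at h
  obtain ⟨p, z, hz, rfl⟩ := h
  rw [Ideal.mem_span_insert] at hz
  obtain ⟨q, z', hz', rfl⟩ := hz
  rw [Ideal.mem_span_singleton'] at hz'
  obtain ⟨r, rfl⟩ := hz'
  exact ⟨p, q, r, by ring⟩

lemma abstract_eq {R : Type*} [CommRing R] (P qx qy b t1 t3 : R)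
    (F1 : ∀ f, b * f ∈ Ideal.span {1 - t1 * t3, qy + t1 * P, qx + t3 * P} →
      f ∈ Ideal.span {1 - t1 * t3, qy + t1 * P, qx + t3 * P})
    (F2 : ∀ f, b * f ∈ Ideal.span {P, qy, qx} → f ∈ Ideal.span {P, qy, qx})
    (F3 : ∀ f, (1 - t1 * t3) * f ∈ Ideal.span {P, qy, qx} → f ∈ Ideal.span {P, qy, qx}) :
    Ideal.span {qy + t1 * P, qx + t3 * P, b * (1 - t1 * t3) * P} =
      Ideal.span {b, qy + t1 * P, qx + t3 * P} ⊓
        Ideal.span {1 - t1 * t3, qy + t1 * P, qx + t3 * P} ⊓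
        Ideal.span {P, qy, qx} := by
  apply le_antisymm
  · refine le_inf (le_inf ?_ ?_) ?_ <;> rw [Ideal.span_le] <;>
      (intro x hx; simp only [Set.mem_insert_iff, Set.mem_singleton_iff] at hx;
       rcases hx with rfl | rfl | rfl)
    · exact mem_span_tripleX 0 1 0 (by ring)
    · exact mem_span_tripleX 0 0 1 (by ring)
    · exact mem_span_tripleX ((1 - t1 * t3) * P) 0 0 (by ring)
    · exact mem_span_tripleX 0 1 0 (by ring)
    · exact mem_span_tripleX 0 0 1 (by ring)
    · exact mem_span_tripleX (b * P) 0 0 (by ring)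
    · exact mem_span_tripleX t1 1 0 (by ring)
    · exact mem_span_tripleX t3 0 1 (by ring)
    · exact mem_span_tripleX (b * (1 - t1 * t3)) 0 0 (by ring)
  · intro x hx
    have h1 := (Ideal.mem_inf.mp (Ideal.mem_inf.mp hx).1).1
    have h2 := (Ideal.mem_inf.mp (Ideal.mem_inf.mp hx).1).2
    have h3 := (Ideal.mem_inf.mp hx).2
    obtain ⟨u, α, β, hx1⟩ := span_triple_exists h1
    have hub : b * u ∈ Ideal.span {1 - t1 * t3, qy + t1 * P, qx + t3 * P} := by
      have he : b * u = x - (α * (qy + t1 * P) + β * (qx + t3 * P)) := by rw [hx1]; ring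
      rw [he]
      exact sub_mem h2 (add_mem (mem_span_tripleX 0 α 0 (by ring))
        (mem_span_tripleX 0 0 β (by ring)))
    obtain ⟨v, α', β', hu⟩ := span_triple_exists (F1 u hub)
    have hkey : b * (v * (1 - t1 * t3)) ∈ Ideal.span ({P, qy, qx} : Set R) := by
      have he : b * (v * (1 - t1 * t3)) =
          x - ((α + b * α') * (qy + t1 * P) + (β + b * β') * (qx + t3 * P)) := by
        rw [hx1, hu]; ring
      rw [he]
      exact sub_mem h3 (add_mem
        (Ideal.mul_mem_left _ _ (mem_span_tripleX t1 1 0 (by ring)))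
        (Ideal.mul_mem_left _ _ (mem_span_tripleX t3 0 1 (by ring))))
    have hv1 := F2 _ hkey
    have hv : v ∈ Ideal.span ({P, qy, qx} : Set R) := F3 v (by rw [mul_comm]; exact hv1)
    obtain ⟨s, γ, δ, hv2⟩ := span_triple_exists hv
    exact mem_span_tripleX (α + b * α' + b * (1 - t1 * t3) * γ)
      (β + b * β' + b * (1 - t1 * t3) * δ) (s - γ * t1 - δ * t3) (by rw [hx1, hu, hv2]; ring)

variable (m : ℕ) (k : Type) [CommRing k]

/-- coefficient ring -/
abbrev CR := MvPolynomial (Fin m ⊕ Fin m) k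

def P0 : CR m k := ∑ i : Fin m, X (Sum.inl i) * X (Sum.inr i)
def Qx0 : CR m k := 1 + ∑ i : Fin m, X (Sum.inl i) ^ 2
def Qy0 : CR m k := 1 + ∑ i : Fin m, X (Sum.inr i) ^ 2

def E1 : MvPolynomial (Var m) k ≃ₐ[k] MvPolynomial (Fin 3) (CR m k) :=
  (renameEquiv k (Equiv.sumComm (Fin m ⊕ Fin m) (Fin 3))).trans
    (sumAlgEquiv k (Fin 3) (Fin m ⊕ Fin m))

lemma E1_Xl (v : Fin m ⊕ Fin m) : E1 m k (X (Sum.inl v)) = C (X v) := by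
  simp [E1, sumAlgEquiv_X_inr]

lemma E1_Xr (j : Fin 3) : E1 m k (X (Sum.inr j)) = X j := by
  simp [E1, sumAlgEquiv_X_inl]

lemma E1_P : E1 m k (Pxy m k) = C (P0 m k) := by
  simp [Pxy, P0, map_sum, E1_Xl]

lemma E1_Qx : E1 m k (Qx m k) = C (Qx0 m k) := by
  simp [Qx, Qx0, map_sum, E1_Xl]

lemma E1_Qy : E1 m k (Qy m k) = C (Qy0 m k) := by
  simp [Qy, Qy0, map_sum, E1_Xl]

lemma E1_w0 : E1 m k (w0 m k) = X 0 := by simp [w0, E1_Xr]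
lemma E1_w1 : E1 m k (w1 m k) = X 1 := by simp [w1, E1_Xr]
lemma E1_w2 : E1 m k (w2 m k) = X 2 := by simp [w2, E1_Xr]

-- transfer lemma and regularity lemmas assumed from aux (inline here)
lemma mem_span_equivX {R S : Type*} [CommRing R] [CommRing S] (e : R ≃+* S) (s : Set R) (x : R) :
    x ∈ Ideal.span s ↔ e x ∈ Ideal.span (e '' s) := by
  rw [← Ideal.map_span e s]
  exact ⟨fun h => Ideal.mem_map_of_mem _ h, fun h => by
    have := Ideal.comap_map_of_bijective e e.bijective (I := Ideal.span s)
    rw [← this]; exact h⟩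

lemma reg_X0 {D : Type*} [CommRing D] (J : Ideal D) (g : MvPolynomial (Fin 3) D)
    (h : X 0 * g ∈ J.map (C : D →+* MvPolynomial (Fin 3) D)) : g ∈ J.map C := by
  rw [mem_map_C_iff] at h ⊢
  intro mm
  have := h (Finsupp.single 0 1 + mm)
  rwa [coeff_X_mul] at this

lemma E1r (x : MvPolynomial (Var m) k) : (E1 m k).toRingEquiv x = E1 m k x := rfl

lemma F2c (f : MvPolynomial (Var m) k)
    (h : w0 m k * f ∈ Ideal.span {Pxy m k, Qy m k, Qx m k}) :
    f ∈ Ideal.span {Pxy m k, Qy m k, Qx m k} := by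
  have himg : (⇑(E1 m k).toRingEquiv) '' {Pxy m k, Qy m k, Qx m k} =
      (⇑(C : CR m k →+* MvPolynomial (Fin 3) (CR m k))) '' {P0 m k, Qy0 m k, Qx0 m k} := by
    simp only [Set.image_insert_eq, Set.image_singleton, E1r, E1_P, E1_Qy, E1_Qx]
  rw [mem_span_equivX (E1 m k).toRingEquiv, himg, ← Ideal.map_span] at h ⊢
  apply reg_X0
  have he : (E1 m k).toRingEquiv (w0 m k * f) = X 0 * (E1 m k).toRingEquiv f := by
    simp only [E1r, map_mul, E1_w0]
  rwa [he] at h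
-- regularity of 1 - X 1 * X 2
lemma reg_one_sub {D : Type*} [CommRing D] (J : Ideal D) (g : MvPolynomial (Fin 3) D)
    (h : (1 - X 1 * X 2) * g ∈ J.map (C : D →+* MvPolynomial (Fin 3) D)) : g ∈ J.map C := by
  rw [mem_map_C_iff] at h ⊢
  have key : ∀ t (mm : Fin 3 →₀ ℕ), g.totalDegree < (∑ i ∈ mm.support, mm i) + t →
      coeff mm g ∈ J := by
    intro t
    induction t with
    | zero =>
      intro mm hm
      rw [coeff_eq_zero_of_totalDegree_lt (by simpa using hm)]
      exact J.zero_mem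
    | succ t ih =>
      intro mm hm
      set mm' : Fin 3 →₀ ℕ := Finsupp.single 1 1 + (Finsupp.single 2 1 + mm) with hmm'
      have hsum : (∑ i ∈ mm'.support, mm' i) = (∑ i ∈ mm.support, mm i) + 2 := by
        have h1 : (∑ i ∈ mm'.support, mm' i) = mm'.sum fun _ v => v := rfl
        have h2 : (∑ i ∈ mm.support, mm i) = mm.sum fun _ v => v := rfl
        rw [h1, h2, hmm', Finsupp.sum_add_index' (fun _ => rfl) (fun _ _ _ => rfl),
          Finsupp.sum_add_index' (fun _ => rfl) (fun _ _ _ => rfl),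
          Finsupp.sum_single_index rfl, Finsupp.sum_single_index rfl]
        ring
      have h1 : coeff mm' g ∈ J := ih mm' (by omega)
      have h3 : coeff mm' ((1 - X 1 * X 2) * g) = coeff mm' g - coeff mm g := by
        rw [sub_mul, one_mul, coeff_sub, hmm', mul_assoc, coeff_X_mul, coeff_X_mul]
      have : coeff mm g = coeff mm' g - coeff mm' ((1 - X 1 * X 2) * g) := by
        rw [h3]; ring
      rw [this]
      exact J.sub_mem h1 (h mm')
  intro mm
  exact key (g.totalDegree + 1) mm (by omega)

-- regularity of Polynomial.X
lemma reg_polyX {D : Type*} [CommRing D] (J : Ideal D) (g : Polynomial D)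
    (h : Polynomial.X * g ∈ J.map (Polynomial.C : D →+* Polynomial D)) :
    g ∈ J.map Polynomial.C := by
  rw [Ideal.mem_map_C_iff] at h ⊢
  intro nn
  have := h (nn + 1)
  rwa [Polynomial.coeff_X_mul] at this

lemma F3c (f : MvPolynomial (Var m) k)
    (h : (1 - w1 m k * w2 m k) * f ∈ Ideal.span {Pxy m k, Qy m k, Qx m k}) :
    f ∈ Ideal.span {Pxy m k, Qy m k, Qx m k} := by
  have himg : (⇑(E1 m k).toRingEquiv) '' {Pxy m k, Qy m k, Qx m k} =
      (⇑(C : CR m k →+* MvPolynomial (Fin 3) (CR m k))) '' {P0 m k, Qy0 m k, Qx0 m k} := by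
    simp only [Set.image_insert_eq, Set.image_singleton, E1r, E1_P, E1_Qy, E1_Qx]
  rw [mem_span_equivX (E1 m k).toRingEquiv, himg, ← Ideal.map_span] at h ⊢
  apply reg_one_sub
  have he : (E1 m k).toRingEquiv ((1 - w1 m k * w2 m k) * f) =
      (1 - X 1 * X 2) * (E1 m k).toRingEquiv f := by
    simp only [E1r, map_mul, map_sub, map_one, E1_w1, E1_w2]
  rwa [he] at h

-- the composed equivalence isolating the variable b
def E2 : MvPolynomial (Var m) k ≃+* Polynomial (MvPolynomial (Fin 2) (CR m k)) :=
  ((E1 m k).toRingEquiv).trans (MvPolynomial.finSuccEquiv (CR m k) 2).toRingEquiv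

lemma fS_C (c : CR m k) :
    MvPolynomial.finSuccEquiv (CR m k) 2 (C c) = Polynomial.C (C c) := by
  simp [finSuccEquiv_apply]

lemma fS_X1 : MvPolynomial.finSuccEquiv (CR m k) 2 (X 1) = Polynomial.C (X 0) := by
  have : ((1 : Fin 3)) = (0 : Fin 2).succ := rfl
  rw [this, finSuccEquiv_X_succ]

lemma fS_X2 : MvPolynomial.finSuccEquiv (CR m k) 2 (X 2) = Polynomial.C (X 1) := by
  have : ((2 : Fin 3)) = (1 : Fin 2).succ := rfl
  rw [this, finSuccEquiv_X_succ]

lemma E2_w0 : E2 m k (w0 m k) = Polynomial.X := by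
  rw [E2, RingEquiv.trans_apply, E1r, E1_w0]
  exact finSuccEquiv_X_zero

lemma E2_one_sub : E2 m k (1 - w1 m k * w2 m k) = Polynomial.C (1 - X 0 * X 1) := by
  rw [E2, RingEquiv.trans_apply, E1r]
  rw [map_sub, map_one, map_mul, E1_w1, E1_w2]
  show (MvPolynomial.finSuccEquiv (CR m k) 2) (1 - X 1 * X 2) = _
  rw [map_sub, map_one, map_mul, fS_X1, fS_X2, ← Polynomial.C_mul, ← Polynomial.C_1,
    ← Polynomial.C_sub]

lemma E2_A : E2 m k (Qy m k + w1 m k * Pxy m k) = Polynomial.C (C (Qy0 m k) + X 0 * C (P0 m k)) := by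
  rw [E2, RingEquiv.trans_apply, E1r, map_add, map_mul, E1_Qy, E1_w1, E1_P]
  show (MvPolynomial.finSuccEquiv (CR m k) 2) (C (Qy0 m k) + X 1 * C (P0 m k)) = _
  rw [map_add, map_mul, fS_C, fS_X1, fS_C, ← Polynomial.C_mul, ← Polynomial.C_add]

lemma E2_B : E2 m k (Qx m k + w2 m k * Pxy m k) = Polynomial.C (C (Qx0 m k) + X 1 * C (P0 m k)) := by
  rw [E2, RingEquiv.trans_apply, E1r, map_add, map_mul, E1_Qx, E1_w2, E1_P]
  show (MvPolynomial.finSuccEquiv (CR m k) 2) (C (Qx0 m k) + X 2 * C (P0 m k)) = _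
  rw [map_add, map_mul, fS_C, fS_X2, fS_C, ← Polynomial.C_mul, ← Polynomial.C_add]

lemma F1c (f : MvPolynomial (Var m) k)
    (h : w0 m k * f ∈
      Ideal.span {1 - w1 m k * w2 m k, Qy m k + w1 m k * Pxy m k, Qx m k + w2 m k * Pxy m k}) :
    f ∈ Ideal.span {1 - w1 m k * w2 m k, Qy m k + w1 m k * Pxy m k, Qx m k + w2 m k * Pxy m k} := by
  have himg : (⇑(E2 m k)) ''
      {1 - w1 m k * w2 m k, Qy m k + w1 m k * Pxy m k, Qx m k + w2 m k * Pxy m k} =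
      (⇑(Polynomial.C : MvPolynomial (Fin 2) (CR m k) →+* _)) ''
        {1 - X 0 * X 1, C (Qy0 m k) + X 0 * C (P0 m k), C (Qx0 m k) + X 1 * C (P0 m k)} := by
    simp only [Set.image_insert_eq, Set.image_singleton, E2_one_sub, E2_A, E2_B]
  have h' := (mem_span_equivX (S := Polynomial (MvPolynomial (Fin 2) (CR m k)))
    (E2 m k) _ _).mp h
  clear h; rename' h' => h
  rw [mem_span_equivX (S := Polynomial (MvPolynomial (Fin 2) (CR m k))) (E2 m k) _ f]
  rw [himg] at h ⊢
  rw [← Ideal.map_span] at h ⊢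
  apply reg_polyX
  have he : E2 m k (w0 m k * f) = Polynomial.X * E2 m k f := by
    rw [map_mul, E2_w0]
  rwa [he] at h


/-- `J̄₂ = (Q(y)+t₁P, Q(x)+t₃P, b(1−t₁t₃)P)` equals `I'₁ ∩ I'₂ ∩ I'₃`.
Here `w0 = b`, `w1 = t₁`, `w2 = t₃`. -/
theorem stmt10 (k : Type) [Field k] (hk : (2 : k) ≠ 0) (n : ℕ) (hn : 3 ≤ n) :
    Ideal.span {Qy (n-2) k + w1 (n-2) k * (Pxy (n-2) k), Qx (n-2) k + w2 (n-2) k * (Pxy (n-2) k),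
        (w0 (n-2) k) * (1 - w1 (n-2) k * (w2 (n-2) k)) * (Pxy (n-2) k)} =
      Ideal.span {w0 (n-2) k, Qy (n-2) k + w1 (n-2) k * (Pxy (n-2) k), Qx (n-2) k + w2 (n-2) k * (Pxy (n-2) k)} ⊓
        Ideal.span {1 - w1 (n-2) k * (w2 (n-2) k), Qy (n-2) k + w1 (n-2) k * (Pxy (n-2) k), Qx (n-2) k + w2 (n-2) k * (Pxy (n-2) k)} ⊓
        Ideal.span {Pxy (n-2) k, Qy (n-2) k, Qx (n-2) k} := by
  exact abstract_eq (Pxy (n-2) k) (Qx (n-2) k) (Qy (n-2) k) (w0 (n-2) k) (w1 (n-2) k)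
    (w2 (n-2) k) (F1c (n-2) k) (F2c (n-2) k) (F3c (n-2) k)
end
end
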